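/- For every integer l ≥ 1, ∑_{n=0}^{l} d_{G₂}(n) − A(l) = ∑_{n=0}^{l-1} d_{G₂}(n), where d_{G₂}(n) = (n+1)(n+2)(2n+3)(3n+4)(3n+5)/120 and A(l) = ∑_{i=0}^{⌊l/2⌋} [ ∑_{k=i}^{l-i} d_{A₂}(k,i) + ∑_{j=i+1}^{l-i} d_{A₂}(i,j) + ∑_{k=i+1}^{l-i} ∑_{j=i+1}^{l-i} ( N₁(k,j) + N₂(k,j) ) ], with d_{A₂}(m,n) = (m+1)(n+1)(m+n+2)/2, N₁(k,j) the number of integer pairs (p,q) with 0 ≤ p ≤ j, 0 ≤ q ≤ p+k, and N₂(k,j) the number of integer pairs (p,q) with 0 ≤ p ≤ k−1, 0 ≤ q ≤ p+j. (This is the cardinality content of Lemma 'subset': 𝒢^l ∖ 𝒜^{(l)} ≅ 𝒢^{l−1} as crystal bases of U_q(A₂).) -/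

import Mathlib

open Finset

/-- d_{G₂}(n) = (n+1)(n+2)(2n+3)(3n+4)(3n+5)/120, the cardinality of B^{G₂}(nΛ₁). -/
def dG2 (n : ℕ) : ℕ := (n + 1) * (n + 2) * (2 * n + 3) * (3 * n + 4) * (3 * n + 5) / 120

/-- d_{A₂}(m,n) = (m+1)(n+1)(m+n+2)/2, the cardinality of B^{A₂}(mΛ₁+nΛ₀). -/
def dA2 (m n : ℕ) : ℕ := (m + 1) * (n + 1) * (m + n + 2) / 2

/-- A(l) = ♯𝒜^{(l)}. -/
def Acard (l : ℕ) : ℕ :=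
  ∑ i ∈ range (l / 2 + 1),
    ((∑ k ∈ Icc i (l - i), dA2 k i) +
     (∑ j ∈ Icc (i + 1) (l - i), dA2 i j) +
     (∑ k ∈ Icc (i + 1) (l - i), ∑ j ∈ Icc (i + 1) (l - i),
        (((range (j + 1)).sigma fun p => range (p + k + 1)).card +
         ((range k).sigma fun p => range (p + j + 1)).card)))

lemma two_dvd_aux (m n : ℕ) : 2 ∣ (m + 1) * (n + 1) * (m + n + 2) := by
  rcases Nat.even_or_odd m with ⟨a, ha⟩ | ⟨a, ha⟩ <;>
    rcases Nat.even_or_odd n with ⟨b, hb⟩ | ⟨b, hb⟩ <;> subst ha hb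
  · exact ⟨(a + a + 1) * (b + b + 1) * (a + b + 1), by ring⟩
  · exact ⟨(a + a + 1) * (b + 1) * (a + a + 2 * b + 3), by ring⟩
  · exact ⟨(a + 1) * (b + b + 1) * (2 * a + 1 + (b + b) + 2), by ring⟩
  · exact ⟨(a + 1) * (2 * b + 2) * (2 * a + 2 * b + 4), by ring⟩

lemma dA2_two (m n : ℕ) : dA2 m n * 2 = (m + 1) * (n + 1) * (m + n + 2) :=
  Nat.div_mul_cancel (two_dvd_aux m n)

set_option maxRecDepth 10000 in
lemma dvd120 (n : ℕ) :
    120 ∣ (n + 1) * (n + 2) * (2 * n + 3) * (3 * n + 4) * (3 * n + 5) := by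
  have h : (((n + 1) * (n + 2) * (2 * n + 3) * (3 * n + 4) * (3 * n + 5) : ℕ) :
      ZMod 120) = 0 := by
    push_cast
    generalize ((n : ZMod 120)) = x
    revert x
    decide
  exact (ZMod.natCast_eq_zero_iff _ _).mp h

lemma dG2_120 (n : ℕ) :
    dG2 n * 120 = (n + 1) * (n + 2) * (2 * n + 3) * (3 * n + 4) * (3 * n + 5) :=
  Nat.div_mul_cancel (dvd120 n)

lemma sumpc (c : ℕ) : ∀ a : ℕ, (∑ p ∈ range a, (p + c + 1)) * 2 = a * (a + 2 * c + 1) := by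
  intro a
  induction a with
  | zero => simp
  | succ a ih => rw [sum_range_succ, add_mul, ih]; ring

lemma cardA (k j : ℕ) :
    ((range (j + 1)).sigma fun p => range (p + k + 1)).card * 2
      = (j + 1) * (j + 2 * k + 2) := by
  rw [Finset.card_sigma]
  simp only [Finset.card_range]
  rw [sumpc k (j + 1)]
  ring

lemma cardB (k j : ℕ) :
    ((range k).sigma fun p => range (p + j + 1)).card * 2 = k * (k + 2 * j + 1) := by
  rw [Finset.card_sigma]
  simp only [Finset.card_range]
  rw [sumpc j k]

lemma LA (i : ℕ) : ∀ s : ℕ,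
    ((∑ t ∈ range s, (i + t + 1) * (i + 1) * (i + t + i + 2) : ℕ) : ℤ) * 6
      = 4 * s + 6 * (s : ℤ) ^ 2 + 2 * (s : ℤ) ^ 3 + 19 * i * s + 15 * i * (s : ℤ) ^ 2
        + 2 * i * (s : ℤ) ^ 3 + 27 * (i : ℤ) ^ 2 * s + 9 * (i : ℤ) ^ 2 * (s : ℤ) ^ 2
        + 12 * (i : ℤ) ^ 3 * s := by
  intro s
  induction s with
  | zero => simp
  | succ s ih =>
    rw [sum_range_succ]
    push_cast at ih ⊢
    linear_combination ih

lemma LB (i : ℕ) : ∀ s : ℕ,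
    ((∑ t ∈ range s, (i + 1) * (i + 1 + t + 1) * (i + (i + 1 + t) + 2) : ℕ) : ℤ) * 6
      = 22 * s + 12 * (s : ℤ) ^ 2 + 2 * (s : ℤ) ^ 3 + 55 * i * s + 21 * i * (s : ℤ) ^ 2
        + 2 * i * (s : ℤ) ^ 3 + 45 * (i : ℤ) ^ 2 * s + 9 * (i : ℤ) ^ 2 * (s : ℤ) ^ 2
        + 12 * (i : ℤ) ^ 3 * s := by
  intro s
  induction s with
  | zero => simp
  | succ s ih =>
    rw [sum_range_succ]
    push_cast at ih ⊢
    linear_combination ih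

lemma LDin (i a : ℕ) : ∀ s : ℕ,
    ((∑ b ∈ range s,
        ((i + 1 + b + 1) * (i + 1 + b + 2 * (i + 1 + a) + 2)
          + (i + 1 + a) * (i + 1 + a + 2 * (i + 1 + b) + 1)) : ℕ) : ℤ) * 6
      = 58 * s + 24 * (s : ℤ) ^ 2 + 2 * (s : ℤ) ^ 3 + 42 * a * s + 12 * a * (s : ℤ) ^ 2
        + 6 * (a : ℤ) ^ 2 * s + 90 * i * s + 18 * i * (s : ℤ) ^ 2 + 36 * i * a * s
        + 36 * (i : ℤ) ^ 2 * s := by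
  intro s
  induction s with
  | zero => simp
  | succ s ih =>
    rw [sum_range_succ]
    push_cast at ih ⊢
    linear_combination ih

lemma LDout2 (i : ℕ) (w : ℤ) : ∀ s : ℕ,
    (∑ a ∈ range s,
        (58 * w + 24 * w ^ 2 + 2 * w ^ 3 + 42 * (a : ℤ) * w + 12 * (a : ℤ) * w ^ 2
          + 6 * (a : ℤ) ^ 2 * w + 90 * (i : ℤ) * w + 18 * (i : ℤ) * w ^ 2
          + 36 * (i : ℤ) * (a : ℤ) * w + 36 * (i : ℤ) ^ 2 * w)) * 6
      = 228 * w * s + 108 * w * (s : ℤ) ^ 2 + 12 * w * (s : ℤ) ^ 3 + 108 * w ^ 2 * s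
        + 36 * w ^ 2 * (s : ℤ) ^ 2 + 12 * w ^ 3 * s + 432 * i * w * s
        + 108 * i * w * (s : ℤ) ^ 2 + 108 * i * w ^ 2 * s
        + 216 * (i : ℤ) ^ 2 * w * s := by
  intro s
  induction s with
  | zero => simp
  | succ s ih =>
    rw [sum_range_succ, add_mul, ih]
    push_cast
    ring

lemma key (i s : ℕ) :
    (((∑ k ∈ Icc i (i + s), dA2 k i) +
      (∑ j ∈ Icc (i + 1) (i + s), dA2 i j) +
      (∑ k ∈ Icc (i + 1) (i + s), ∑ j ∈ Icc (i + 1) (i + s),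
        (((range (j + 1)).sigma fun p => range (p + k + 1)).card +
         ((range k).sigma fun p => range (p + j + 1)).card)) : ℕ) : ℤ) * 360
    = 360 + 1320 * s + 1860 * (s : ℤ) ^ 2 + 1200 * (s : ℤ) ^ 3 + 300 * (s : ℤ) ^ 4
      + 1080 * i + 3300 * i * s + 3420 * i * (s : ℤ) ^ 2 + 1200 * i * (s : ℤ) ^ 3
      + 1080 * (i : ℤ) ^ 2 + 2700 * (i : ℤ) ^ 2 * s + 1620 * (i : ℤ) ^ 2 * (s : ℤ) ^ 2
      + 360 * (i : ℤ) ^ 3 + 720 * (i : ℤ) ^ 3 * s := by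
  -- convert the three Icc-sums to range-sums at the ℕ level
  have h1 : (∑ k ∈ Icc i (i + s), dA2 k i) * 2
      = ∑ t ∈ range (s + 1), (i + t + 1) * (i + 1) * (i + t + i + 2) := by
    rw [Finset.sum_mul, ← Finset.Ico_add_one_right_eq_Icc, Finset.sum_Ico_eq_sum_range]
    have hb : i + s + 1 - i = s + 1 := by omega
    rw [hb]
    exact Finset.sum_congr rfl fun t _ => dA2_two (i + t) i
  have h2 : (∑ j ∈ Icc (i + 1) (i + s), dA2 i j) * 2
      = ∑ t ∈ range s, (i + 1) * (i + 1 + t + 1) * (i + (i + 1 + t) + 2) := by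
    rw [Finset.sum_mul, ← Finset.Ico_add_one_right_eq_Icc, Finset.sum_Ico_eq_sum_range]
    have hb : i + s + 1 - (i + 1) = s := by omega
    rw [hb]
    exact Finset.sum_congr rfl fun t _ => dA2_two i (i + 1 + t)
  have h3 : (∑ k ∈ Icc (i + 1) (i + s), ∑ j ∈ Icc (i + 1) (i + s),
        (((range (j + 1)).sigma fun p => range (p + k + 1)).card +
         ((range k).sigma fun p => range (p + j + 1)).card)) * 2
      = ∑ a ∈ range s, ∑ b ∈ range s,
          ((i + 1 + b + 1) * (i + 1 + b + 2 * (i + 1 + a) + 2)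
            + (i + 1 + a) * (i + 1 + a + 2 * (i + 1 + b) + 1)) := by
    rw [Finset.sum_mul, ← Finset.Ico_add_one_right_eq_Icc, Finset.sum_Ico_eq_sum_range]
    have hb : i + s + 1 - (i + 1) = s := by omega
    rw [hb]
    refine Finset.sum_congr rfl fun a _ => ?_
    rw [Finset.sum_mul, Finset.sum_Ico_eq_sum_range, hb]
    refine Finset.sum_congr rfl fun b _ => ?_
    rw [add_mul, cardA (i + 1 + a) (i + 1 + b), cardB (i + 1 + a) (i + 1 + b)]
  -- cast to ℤ
  have c1 := congrArg (Nat.cast : ℕ → ℤ) h1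
  have c2 := congrArg (Nat.cast : ℕ → ℤ) h2
  have c3 := congrArg (Nat.cast : ℕ → ℤ) h3
  push_cast at c1 c2 c3 ⊢
  -- closed forms
  have a1 := LA i (s + 1); push_cast at a1
  have a2 := LB i s; push_cast at a2
  -- double sum
  have h6 : (∑ a ∈ range s, ∑ b ∈ range s,
        (((i : ℤ) + 1 + b + 1) * ((i : ℤ) + 1 + b + 2 * ((i : ℤ) + 1 + a) + 2)
          + ((i : ℤ) + 1 + a) * ((i : ℤ) + 1 + a + 2 * ((i : ℤ) + 1 + b) + 1))) * 6
      = ∑ a ∈ range s,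
          (58 * (s : ℤ) + 24 * (s : ℤ) ^ 2 + 2 * (s : ℤ) ^ 3 + 42 * (a : ℤ) * (s : ℤ)
            + 12 * (a : ℤ) * (s : ℤ) ^ 2 + 6 * (a : ℤ) ^ 2 * (s : ℤ)
            + 90 * (i : ℤ) * (s : ℤ) + 18 * (i : ℤ) * (s : ℤ) ^ 2
            + 36 * (i : ℤ) * (a : ℤ) * (s : ℤ) + 36 * (i : ℤ) ^ 2 * (s : ℤ)) := by
    rw [Finset.sum_mul]
    refine Finset.sum_congr rfl fun a _ => ?_
    have := LDin i a s
    push_cast at this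
    linear_combination this
  have d2 := LDout2 i (s : ℤ) s
  linear_combination 180 * c1 + 30 * a1 + 180 * c2 + 30 * a2 + 180 * c3 + 30 * h6 + 5 * d2

lemma Lsum (L : ℤ) : ∀ m : ℕ,
    (∑ i ∈ range (m + 1),
      (360 + 1320 * (L - 2 * (i : ℤ)) + 1860 * (L - 2 * (i : ℤ)) ^ 2
        + 1200 * (L - 2 * (i : ℤ)) ^ 3 + 300 * (L - 2 * (i : ℤ)) ^ 4
        + 1080 * (i : ℤ) + 3300 * (i : ℤ) * (L - 2 * (i : ℤ))
        + 3420 * (i : ℤ) * (L - 2 * (i : ℤ)) ^ 2 + 1200 * (i : ℤ) * (L - 2 * (i : ℤ)) ^ 3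
        + 1080 * (i : ℤ) ^ 2 + 2700 * (i : ℤ) ^ 2 * (L - 2 * (i : ℤ))
        + 1620 * (i : ℤ) ^ 2 * (L - 2 * (i : ℤ)) ^ 2 + 360 * (i : ℤ) ^ 3
        + 720 * (i : ℤ) ^ 3 * (L - 2 * (i : ℤ))))
    = 360 - 108 * (m : ℤ) - 60 * (m : ℤ) ^ 2 + 240 * (m : ℤ) ^ 3 - 120 * (m : ℤ) ^ 4
      + 48 * (m : ℤ) ^ 5 + 1320 * L - 180 * L * m - 600 * L * (m : ℤ) ^ 2
      + 660 * L * (m : ℤ) ^ 3 - 240 * L * (m : ℤ) ^ 4 + 1860 * L ^ 2 + 240 * L ^ 2 * m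
      - 1080 * L ^ 2 * (m : ℤ) ^ 2 + 540 * L ^ 2 * (m : ℤ) ^ 3 + 1200 * L ^ 3
      + 600 * L ^ 3 * m - 600 * L ^ 3 * (m : ℤ) ^ 2 + 300 * L ^ 4 + 300 * L ^ 4 * m := by
  intro m
  induction m with
  | zero => norm_num
  | succ m ih =>
    rw [sum_range_succ, ih]
    push_cast
    ring

lemma Acard_eq_dG2 (l : ℕ) : Acard l = dG2 l := by
  have hmain : (Acard l : ℤ) * 360 = (dG2 l : ℤ) * 360 := by
    have hA : (Acard l : ℤ) * 360
        = ∑ i ∈ range (l / 2 + 1),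
            (360 + 1320 * ((l : ℤ) - 2 * (i : ℤ)) + 1860 * ((l : ℤ) - 2 * (i : ℤ)) ^ 2
              + 1200 * ((l : ℤ) - 2 * (i : ℤ)) ^ 3 + 300 * ((l : ℤ) - 2 * (i : ℤ)) ^ 4
              + 1080 * (i : ℤ) + 3300 * (i : ℤ) * ((l : ℤ) - 2 * (i : ℤ))
              + 3420 * (i : ℤ) * ((l : ℤ) - 2 * (i : ℤ)) ^ 2
              + 1200 * (i : ℤ) * ((l : ℤ) - 2 * (i : ℤ)) ^ 3
              + 1080 * (i : ℤ) ^ 2 + 2700 * (i : ℤ) ^ 2 * ((l : ℤ) - 2 * (i : ℤ))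
              + 1620 * (i : ℤ) ^ 2 * ((l : ℤ) - 2 * (i : ℤ)) ^ 2 + 360 * (i : ℤ) ^ 3
              + 720 * (i : ℤ) ^ 3 * ((l : ℤ) - 2 * (i : ℤ))) := by
      rw [Acard, Nat.cast_sum, Finset.sum_mul]
      refine Finset.sum_congr rfl fun i hi => ?_
      have h2i : 2 * i ≤ l := by
        have := mem_range.mp hi
        omega
      have hsub : l - i = i + (l - 2 * i) := by omega
      rw [hsub, key i (l - 2 * i), Nat.cast_sub h2i]
      push_cast
      ring
    rw [hA, Lsum (l : ℤ) (l / 2)]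
    have hG : (dG2 l : ℤ) * 120
        = ((l : ℤ) + 1) * ((l : ℤ) + 2) * (2 * (l : ℤ) + 3) * (3 * (l : ℤ) + 4)
            * (3 * (l : ℤ) + 5) := by
      have := congrArg (Nat.cast : ℕ → ℤ) (dG2_120 l)
      push_cast at this
      linarith [this]
    have hpar : l = 2 * (l / 2) ∨ l = 2 * (l / 2) + 1 := by omega
    rcases hpar with h | h
    · have hl2 : ((l : ℤ)) = 2 * ((l / 2 : ℕ) : ℤ) := by exact_mod_cast congrArg (Nat.cast : ℕ → ℤ) h
      rw [hl2] at hG ⊢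
      linear_combination (-3) * hG
    · have hl2 : ((l : ℤ)) = 2 * ((l / 2 : ℕ) : ℤ) + 1 := by
        exact_mod_cast congrArg (Nat.cast : ℕ → ℤ) h
      rw [hl2] at hG ⊢
      linear_combination (-3) * hG
  have := mul_right_cancel₀ (by norm_num : (360 : ℤ) ≠ 0) hmain
  exact_mod_cast this

/-- Cardinality content of Lemma `subset`: 𝒢^l ∖ 𝒜^{(l)} ≅ 𝒢^{l−1}, i.e.
∑_{n=0}^{l} d_{G₂}(n) − A(l) = ∑_{n=0}^{l-1} d_{G₂}(n). -/
theorem stmt_10 (l : ℕ) (hl : 1 ≤ l) :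
    (∑ n ∈ range (l + 1), dG2 n) - Acard l = ∑ n ∈ range l, dG2 n := by
  rw [Finset.sum_range_succ, Acard_eq_dG2 l]
  omega
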